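/- (Breakdown of Gl-QGMRES is equivalent to exactness.) Let A ∈ ℍ^{n×n} be invertible, let B, X₀ ∈ ℍ^{n×m}, R₀ := B − A X₀, β := ‖R₀‖ > 0, V₁ := R₀ β^{-1}, and assume the Arnoldi hypotheses through step k−1 (no breakdown before step k). Define h_{i,k} = tr(V_i^*(A V_k)) for i = 1, …, k and W_k := A V_k − Σ_{i=1}^k V_i h_{i,k}. Then W_k = 0 (breakdown at step k) if and only if there exists y ∈ ℍ^k such that A(X₀ + Σ_{j=1}^k V_j y_j) = B; in particular, when W_k = 0 the k×k quaternion matrix H_k = (h_{i,j}) (with h_{i,j} := 0 for i > j+1) is invertible and the exact solution is X_k = X₀ + Σ_{j=1}^k V_j y_j with y = β H_k^{-1} e₁. -/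

import Mathlib

/-!
Gram–Schmidt makes `V₁, …, V_k` orthonormal, and the Arnoldi relation
`A V_j = Σ_{i ≤ j+1} V_i h_{i,j}` (`j < k`) puts `A V_j` in `𝒦 = span(V₁, …, V_k)`; `W` is the
component of `A V_k` orthogonal to `𝒦`.

If `W = 0`, then `A 𝒦 ⊆ 𝒦` and `A` acts on coordinates by `H_k`, which is injective because `A`
is, hence invertible; since `R₀ = V₁ β`, the coordinates `β H_k⁻¹ e₁` solve the system.

If `W ≠ 0`, test an equation `A (Σ_j V_j y_j) = V₁ b` against `W, V_k, …, V₂`. Each test vector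
is orthogonal to `V₁` and to every `A V_j` below its level but not to the one at its level
(`⟨W, A V_k⟩ = ‖W‖²`, `⟨V_{j+1}, A V_j⟩ = h_{j+1,j} ≠ 0`), so `y_k = ⋯ = y₁ = 0` and `b = 0`,
which `β > 0` forbids.
-/

open Matrix Quaternion

noncomputable section

/-- Entrywise right scalar multiple of a quaternion matrix. -/
def qsmul {n m : ℕ} (X : Matrix (Fin n) (Fin m) ℍ[ℝ]) (a : ℍ[ℝ]) :
    Matrix (Fin n) (Fin m) ℍ[ℝ] := fun i j => X i j * a

/-- Frobenius norm of a quaternion matrix: `‖X‖ = (Re tr(X^* X))^{1/2}`. -/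
def qnorm {n m : ℕ} (X : Matrix (Fin n) (Fin m) ℍ[ℝ]) : ℝ :=
  Real.sqrt (Matrix.trace (Xᴴ * X)).re

/-- The Arnoldi hypotheses through step `k`. -/
structure ArnoldiData (n m k : ℕ) (A : Matrix (Fin n) (Fin n) ℍ[ℝ])
    (V : ℕ → Matrix (Fin n) (Fin m) ℍ[ℝ]) (h : ℕ → ℕ → ℍ[ℝ]) : Prop where
  normV1 : qnorm (V 1) = 1
  hdef : ∀ j ∈ Finset.Icc 1 k, ∀ i ∈ Finset.Icc 1 j,
      h i j = Matrix.trace ((V i)ᴴ * (A * V j))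
  hsub : ∀ j ∈ Finset.Icc 1 k,
      h (j+1) j = (qnorm (A * V j - ∑ i ∈ Finset.Icc 1 j, qsmul (V i) (h i j)) : ℍ[ℝ])
  hsub_ne : ∀ j ∈ Finset.Icc 1 k, h (j+1) j ≠ 0
  vdef : ∀ j ∈ Finset.Icc 1 k,
      V (j+1) = qsmul (A * V j - ∑ i ∈ Finset.Icc 1 j, qsmul (V i) (h i j)) (h (j+1) j)⁻¹


open Finset

lemma Quaternion.coe_eq_zero {r : ℝ} : (r : ℍ[ℝ]) = 0 ↔ r = 0 := by
  rw [← Quaternion.coe_zero, Quaternion.coe_inj]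

namespace GlQGMRES

variable {n m : ℕ}

/-- `tr(X^* Y)`, i.e. the paper's `⟨Y, X⟩`: conjugate-linear in `X`, right-linear in `Y`. -/
def qinner (X Y : Matrix (Fin n) (Fin m) ℍ[ℝ]) : ℍ[ℝ] := trace (Xᴴ * Y)

lemma qsmul_zero (X : Matrix (Fin n) (Fin m) ℍ[ℝ]) : qsmul X 0 = 0 := by
  ext i j : 1; simp [qsmul]

lemma qsmul_one (X : Matrix (Fin n) (Fin m) ℍ[ℝ]) : qsmul X 1 = X := by
  ext i j : 1; simp [qsmul]

lemma qsmul_qsmul (X : Matrix (Fin n) (Fin m) ℍ[ℝ]) (a b : ℍ[ℝ]) :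
    qsmul (qsmul X a) b = qsmul X (a * b) := by
  ext i j : 1; simp [qsmul, mul_assoc]

lemma mul_qsmul {p : ℕ} (A : Matrix (Fin p) (Fin n) ℍ[ℝ]) (X : Matrix (Fin n) (Fin m) ℍ[ℝ])
    (a : ℍ[ℝ]) : A * qsmul X a = qsmul (A * X) a := by
  ext i j : 1; simp [qsmul, Matrix.mul_apply, sum_mul, mul_assoc]

lemma qsmul_sum_left {ι : Type*} (s : Finset ι) (X : ι → Matrix (Fin n) (Fin m) ℍ[ℝ])
    (a : ℍ[ℝ]) : qsmul (∑ i ∈ s, X i) a = ∑ i ∈ s, qsmul (X i) a := by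
  ext i j : 1; simp [qsmul, Matrix.sum_apply, sum_mul]

lemma qsmul_sum_right {ι : Type*} (s : Finset ι) (X : Matrix (Fin n) (Fin m) ℍ[ℝ])
    (a : ι → ℍ[ℝ]) : qsmul X (∑ i ∈ s, a i) = ∑ i ∈ s, qsmul X (a i) := by
  ext i j : 1; simp [qsmul, Matrix.sum_apply, mul_sum]

lemma qinner_zero_right (X : Matrix (Fin n) (Fin m) ℍ[ℝ]) : qinner X 0 = 0 := by
  simp [qinner]

lemma qinner_sub_right (X Y Z : Matrix (Fin n) (Fin m) ℍ[ℝ]) :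
    qinner X (Y - Z) = qinner X Y - qinner X Z := by
  simp [qinner, Matrix.mul_sub]

lemma qinner_sum_right {ι : Type*} (s : Finset ι) (X : Matrix (Fin n) (Fin m) ℍ[ℝ])
    (Y : ι → Matrix (Fin n) (Fin m) ℍ[ℝ]) :
    qinner X (∑ i ∈ s, Y i) = ∑ i ∈ s, qinner X (Y i) := by
  simp [qinner, Matrix.mul_sum]

lemma qinner_qsmul_right (X Y : Matrix (Fin n) (Fin m) ℍ[ℝ]) (a : ℍ[ℝ]) :
    qinner X (qsmul Y a) = qinner X Y * a := by
  rw [qinner, qinner, mul_qsmul]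
  simp [Matrix.trace, qsmul, sum_mul]

lemma star_qinner (X Y : Matrix (Fin n) (Fin m) ℍ[ℝ]) : star (qinner X Y) = qinner Y X := by
  rw [qinner, qinner, ← Matrix.trace_conjTranspose, Matrix.conjTranspose_mul,
    Matrix.conjTranspose_conjTranspose]

lemma qinner_qsmul_left (X Y : Matrix (Fin n) (Fin m) ℍ[ℝ]) (a : ℍ[ℝ]) :
    qinner (qsmul X a) Y = star a * qinner X Y := by
  rw [← star_qinner, qinner_qsmul_right, star_mul, star_qinner]

lemma qinner_self (X : Matrix (Fin n) (Fin m) ℍ[ℝ]) :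
    qinner X X = ((∑ j, ∑ i, normSq (X i j) : ℝ) : ℍ[ℝ]) := by
  simp only [qinner, Matrix.trace, Matrix.diag, Matrix.mul_apply, Matrix.conjTranspose_apply,
    Quaternion.star_mul_self, ← Quaternion.algebraMap_def, map_sum]

lemma qinner_self_eq_qnorm_sq (X : Matrix (Fin n) (Fin m) ℍ[ℝ]) :
    qinner X X = ((qnorm X ^ 2 : ℝ) : ℍ[ℝ]) := by
  have hnonneg : 0 ≤ ∑ j, ∑ i, normSq (X i j) :=
    sum_nonneg fun _ _ ↦ sum_nonneg fun _ _ ↦ normSq_nonneg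
  rw [qnorm, ← qinner, qinner_self, Quaternion.re_coe, Real.sq_sqrt hnonneg]

lemma qinner_self_eq_zero {X : Matrix (Fin n) (Fin m) ℍ[ℝ]} : qinner X X = 0 ↔ X = 0 := by
  rw [qinner_self, Quaternion.coe_eq_zero,
    Fintype.sum_eq_zero_iff_of_nonneg fun _ ↦ sum_nonneg fun _ _ ↦ normSq_nonneg]
  simp only [funext_iff, Pi.zero_apply, sum_eq_zero_iff_of_nonneg fun _ _ ↦ normSq_nonneg,
    mem_univ, true_implies, normSq_eq_zero, ← Matrix.ext_iff, Matrix.zero_apply]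
  exact forall_comm

lemma sum_Icc_one_eq_sum_fin {M : Type*} [AddCommMonoid M] (k : ℕ) (f : ℕ → M) :
    ∑ i ∈ Icc 1 k, f i = ∑ i : Fin k, f (i + 1) := by
  rw [Fin.sum_univ_eq_sum_range (fun i ↦ f (i + 1)), range_eq_Ico, sum_Ico_add',
    Ico_add_one_right_eq_Icc, zero_add]

lemma qinner_qsmul_inv_qnorm_self {Z : Matrix (Fin n) (Fin m) ℍ[ℝ]} (hZ : qnorm Z ≠ 0) :
    qinner (qsmul Z (qnorm Z : ℍ[ℝ])⁻¹) (qsmul Z (qnorm Z : ℍ[ℝ])⁻¹) = 1 := by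
  rw [qinner_qsmul_left, qinner_qsmul_right, qinner_self_eq_qnorm_sq, ← Quaternion.coe_inv,
    Quaternion.star_coe, ← Quaternion.coe_mul, ← Quaternion.coe_mul, ← Quaternion.coe_one,
    Quaternion.coe_inj]
  field_simp

section Orthonormal

variable {ι : Type*} [DecidableEq ι]

def QOrthonormalOn (v : ι → Matrix (Fin n) (Fin m) ℍ[ℝ]) (s : Finset ι) : Prop :=
  ∀ p ∈ s, ∀ q ∈ s, qinner (v p) (v q) = if p = q then 1 else 0

def qproj (v : ι → Matrix (Fin n) (Fin m) ℍ[ℝ]) (s : Finset ι)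
    (Y : Matrix (Fin n) (Fin m) ℍ[ℝ]) : Matrix (Fin n) (Fin m) ℍ[ℝ] :=
  ∑ i ∈ s, qsmul (v i) (qinner (v i) Y)

namespace QOrthonormalOn

variable {v : ι → Matrix (Fin n) (Fin m) ℍ[ℝ]} {s t : Finset ι}

lemma qinner_sum (hv : QOrthonormalOn v s) (ht : t ⊆ s) {p : ι} (hp : p ∈ s) (c : ι → ℍ[ℝ]) :
    qinner (v p) (∑ i ∈ t, qsmul (v i) (c i)) = if p ∈ t then c p else 0 := by
  rw [qinner_sum_right, ← sum_ite_eq t p c]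
  refine sum_congr rfl fun i hi ↦ ?_
  rw [qinner_qsmul_right, hv p hp i (ht hi), ite_mul, one_mul, zero_mul]

lemma qinner_sub_qproj (hv : QOrthonormalOn v s) {p : ι} (hp : p ∈ s)
    (Y : Matrix (Fin n) (Fin m) ℍ[ℝ]) : qinner (v p) (Y - qproj v s Y) = 0 := by
  rw [qinner_sub_right, qproj, hv.qinner_sum subset_rfl hp, if_pos hp, sub_self]

lemma qinner_sub_qproj_sum (hv : QOrthonormalOn v s) (ht : t ⊆ s)
    (Y : Matrix (Fin n) (Fin m) ℍ[ℝ]) (c : ι → ℍ[ℝ]) :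
    qinner (Y - qproj v s Y) (∑ i ∈ t, qsmul (v i) (c i)) = 0 := by
  rw [qinner_sum_right]
  refine sum_eq_zero fun i hi ↦ ?_
  rw [qinner_qsmul_right, ← star_qinner, hv.qinner_sub_qproj (ht hi), star_zero, zero_mul]

lemma qinner_sub_qproj_self (hv : QOrthonormalOn v s) (Y : Matrix (Fin n) (Fin m) ℍ[ℝ]) :
    qinner (Y - qproj v s Y) Y = qinner (Y - qproj v s Y) (Y - qproj v s Y) := by
  conv_rhs => rw [qinner_sub_right]
  exact (sub_eq_self.2 (hv.qinner_sub_qproj_sum subset_rfl Y _)).symm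

lemma qproj_sum (hv : QOrthonormalOn v s) (ht : t ⊆ s) (c : ι → ℍ[ℝ]) :
    qproj v s (∑ i ∈ t, qsmul (v i) (c i)) = ∑ i ∈ t, qsmul (v i) (c i) := by
  calc ∑ i ∈ s, qsmul (v i) (qinner (v i) (∑ i ∈ t, qsmul (v i) (c i)))
      = ∑ i ∈ s, if i ∈ t then qsmul (v i) (c i) else 0 := sum_congr rfl fun i hi ↦ by
        rw [hv.qinner_sum ht hi, apply_ite (qsmul (v i)), qsmul_zero]
    _ = ∑ i ∈ t, qsmul (v i) (c i) := by rw [sum_ite_mem, inter_eq_right.2 ht]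

lemma insert_of_eq_qsmul_sub_qproj (hv : QOrthonormalOn v s) {x : ι} (hx : x ∉ s)
    {Y : Matrix (Fin n) (Fin m) ℍ[ℝ]} (hY : qnorm (Y - qproj v s Y) ≠ 0)
    (hvx : v x = qsmul (Y - qproj v s Y) (qnorm (Y - qproj v s Y) : ℍ[ℝ])⁻¹) :
    QOrthonormalOn v (insert x s) := by
  have horth : ∀ p ∈ s, qinner (v p) (v x) = 0 := fun p hp ↦ by
    rw [hvx, qinner_qsmul_right, hv.qinner_sub_qproj hp, zero_mul]
  intro p hp q hq
  rw [mem_insert] at hp hq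
  rcases hp with rfl | hp <;> rcases hq with rfl | hq
  · rw [if_pos rfl, hvx, qinner_qsmul_inv_qnorm_self hY]
  · rw [← star_qinner, horth q hq, star_zero, if_neg (ne_of_mem_of_not_mem hq hx).symm]
  · rw [horth p hp, if_neg (ne_of_mem_of_not_mem hp hx)]
  · exact hv p hp q hq

lemma fin_succ {V : ℕ → Matrix (Fin n) (Fin m) ℍ[ℝ]} {k : ℕ} (hV : QOrthonormalOn V (Icc 1 k)) :
    QOrthonormalOn (fun i : Fin k ↦ V (i + 1)) univ := fun p _ q _ ↦ by
  simp [hV (p + 1) (by simp) (q + 1) (by simp), Fin.val_inj]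

end QOrthonormalOn

end Orthonormal

theorem eq_zero_of_sum_qsmul_eq {ι : Type*} [LinearOrder ι] {s : Finset ι}
    {a u : ι → Matrix (Fin n) (Fin m) ℍ[ℝ]} {r : Matrix (Fin n) (Fin m) ℍ[ℝ]} {y : ι → ℍ[ℝ]}
    (hy : ∑ j ∈ s, qsmul (a j) (y j) = r) (hr : ∀ p ∈ s, qinner (u p) r = 0)
    (hlow : ∀ p ∈ s, ∀ j ∈ s, j < p → qinner (u p) (a j) = 0)
    (hdiag : ∀ p ∈ s, qinner (u p) (a p) ≠ 0) :
    ∀ j ∈ s, y j = 0 := by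
  classical
  by_contra! hne
  set S := s.filter fun j ↦ y j ≠ 0
  have hS : S.Nonempty := by
    obtain ⟨j, hj, hyj⟩ := hne
    exact ⟨j, mem_filter.2 ⟨hj, hyj⟩⟩
  obtain ⟨hp, hyp⟩ := mem_filter.1 (S.max'_mem hS)
  set p := S.max' hS
  have hrp : qinner (u p) r = qinner (u p) (a p) * y p := by
    rw [← hy, qinner_sum_right, sum_eq_single_of_mem p hp, qinner_qsmul_right]
    intro j hj hjp
    rcases hjp.lt_or_gt with hlt | hgt
    · rw [qinner_qsmul_right, hlow p hp j hj hlt, zero_mul]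
    · have hyj : y j = 0 := by
        by_contra hyj
        exact (S.le_max' j (mem_filter.2 ⟨hj, hyj⟩)).not_gt hgt
      rw [hyj, qsmul_zero, qinner_zero_right]
  exact mul_ne_zero (hdiag p hp) hyp (hrp ▸ hr p hp)

section Compression

variable {ι : Type*} [Fintype ι] {A : Matrix (Fin n) (Fin n) ℍ[ℝ]}
  {v : ι → Matrix (Fin n) (Fin m) ℍ[ℝ]} {H : Matrix ι ι ℍ[ℝ]}

theorem mul_sum_qsmul_eq_sum_qsmul_mulVec (hAv : ∀ j, A * v j = ∑ i, qsmul (v i) (H i j))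
    (c : ι → ℍ[ℝ]) : A * ∑ j, qsmul (v j) (c j) = ∑ i, qsmul (v i) ((H *ᵥ c) i) := by
  simp_rw [Matrix.mul_sum, mul_qsmul, hAv, qsmul_sum_left, qsmul_qsmul]
  rw [sum_comm]
  simp_rw [← qsmul_sum_right]
  rfl

theorem isUnit_of_mul_eq_sum_qsmul [DecidableEq ι] (hA : IsUnit A) (hv : QOrthonormalOn v univ)
    (hAv : ∀ j, A * v j = ∑ i, qsmul (v i) (H i j)) : IsUnit H := by
  have hker : ∀ c, H *ᵥ c = 0 → c = 0 := by
    intro c hc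
    have hsum : ∑ j, qsmul (v j) (c j) = 0 := by
      obtain ⟨u, rfl⟩ := hA
      calc ∑ j, qsmul (v j) (c j) = u.inv * (u.val * ∑ j, qsmul (v j) (c j)) := by
            rw [← Matrix.mul_assoc, u.inv_val, Matrix.one_mul]
        _ = 0 := by
          rw [mul_sum_qsmul_eq_sum_qsmul_mulVec hAv, hc]
          simp [qsmul_zero]
    funext p
    have hp := hv.qinner_sum (subset_refl _) (mem_univ p) c
    rwa [hsum, qinner_zero_right, if_pos (mem_univ p), eq_comm] at hp
  -- No determinant over `ℍ`; instead, in the Artinian ring of matrices over a division ring,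
  -- left-regular elements are units.
  refine IsArtinianRing.isUnit_iff_isLeftRegular.2 (isLeftRegular_iff_mulVec_injective.2 ?_)
  intro c d hcd
  exact sub_eq_zero.1 (hker _ (by rw [Matrix.mulVec_sub, hcd, sub_self]))

theorem mul_sum_qsmul_inverse_mulVec [DecidableEq ι]
    (hAv : ∀ j, A * v j = ∑ i, qsmul (v i) (H i j)) (hH : IsUnit H) (β : ℝ) (b : ι → ℍ[ℝ]) :
    A * ∑ j, qsmul (v j) (β * (Ring.inverse H *ᵥ b) j) = ∑ i, qsmul (v i) (β * b i) := by
  have hc : H *ᵥ (fun j ↦ (β : ℍ[ℝ]) * (Ring.inverse H *ᵥ b) j) = fun i ↦ (β : ℍ[ℝ]) * b i := by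
    simp only [Quaternion.coe_mul_eq_smul]
    rw [← Pi.smul_def, Matrix.mulVec_smul, Matrix.mulVec_mulVec, Ring.mul_inverse_cancel _ hH,
      Matrix.one_mulVec, Pi.smul_def]
  rw [mul_sum_qsmul_eq_sum_qsmul_mulVec hAv, hc]

end Compression

end GlQGMRES

open GlQGMRES

namespace ArnoldiData

variable {n m K : ℕ} {A : Matrix (Fin n) (Fin n) ℍ[ℝ]} {V : ℕ → Matrix (Fin n) (Fin m) ℍ[ℝ]}
  {h : ℕ → ℕ → ℍ[ℝ]}

lemma sum_qsmul_eq_qproj (hA : ArnoldiData n m K A V h) {j : ℕ} (hj : j ∈ Icc 1 K) :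
    ∑ i ∈ Icc 1 j, qsmul (V i) (h i j) = qproj V (Icc 1 j) (A * V j) :=
  sum_congr rfl fun i hi ↦ by rw [hA.hdef j hj i hi]; rfl

theorem orthonormal (hA : ArnoldiData n m K A V h) : QOrthonormalOn V (Icc 1 (K + 1)) := by
  suffices ∀ j ≤ K, QOrthonormalOn V (Icc 1 (j + 1)) from this K le_rfl
  intro j
  induction j with
  | zero =>
    intro _ p hp q hq
    rw [Icc_self, mem_singleton] at hp hq
    subst hp hq
    rw [if_pos rfl, qinner_self_eq_qnorm_sq, hA.normV1]
    norm_num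
  | succ j ih =>
    intro hj
    have hjK : j + 1 ∈ Icc 1 K := mem_Icc.2 ⟨by omega, hj⟩
    have hnorm := hA.hsub (j + 1) hjK
    rw [hA.sum_qsmul_eq_qproj hjK] at hnorm
    rw [← insert_Icc_right_eq_Icc_add_one (by omega)]
    refine (ih (by omega)).insert_of_eq_qsmul_sub_qproj (by simp) (Y := A * V (j + 1)) ?_ ?_
    · intro h0
      exact hA.hsub_ne (j + 1) hjK (by rw [hnorm, h0, Quaternion.coe_zero])
    · rw [hA.vdef (j + 1) hjK, hA.sum_qsmul_eq_qproj hjK, hnorm]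

theorem mul_V (hA : ArnoldiData n m K A V h) {j : ℕ} (hj : j ∈ Icc 1 K) :
    A * V j = ∑ i ∈ Icc 1 (j + 1), qsmul (V i) (h i j) := by
  rw [sum_Icc_succ_top (by simp at hj; omega), hA.vdef j hj, qsmul_qsmul,
    inv_mul_cancel₀ (hA.hsub_ne j hj), qsmul_one]
  abel

theorem qinner_V_mul_V (hA : ArnoldiData n m K A V h) {p j : ℕ} (hp : p ∈ Icc 1 (K + 1))
    (hj : j ∈ Icc 1 K) : qinner (V p) (A * V j) = if p ≤ j + 1 then h p j else 0 := by
  have hjK : j + 1 ≤ K + 1 := by simp at hj; omega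
  rw [hA.mul_V hj, hA.orthonormal.qinner_sum (Icc_subset_Icc_right hjK) hp]
  simp only [mem_Icc, (mem_Icc.1 hp).1, true_and]

theorem qinner_V_mul_V_of_lt (hA : ArnoldiData n m K A V h) {p j : ℕ} (hp : p ≤ K + 1)
    (hj : 1 ≤ j) (hjp : j + 1 < p) : qinner (V p) (A * V j) = 0 := by
  rw [hA.qinner_V_mul_V (by simp; omega) (by simp; omega), if_neg (by omega)]

theorem eq_zero_of_sum_qsmul_mul_V_eq (hA : ArnoldiData n m K A V h)
    (hW : A * V (K + 1) - qproj V (Icc 1 (K + 1)) (A * V (K + 1)) ≠ 0) {y : ℕ → ℍ[ℝ]}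
    {b : ℍ[ℝ]} (hy : ∑ j ∈ Icc 1 (K + 1), qsmul (A * V j) (y j) = qsmul (V 1) b) : b = 0 := by
  set W := A * V (K + 1) - qproj V (Icc 1 (K + 1)) (A * V (K + 1))
  have hV := hA.orthonormal
  have h1 : 1 ∈ Icc 1 (K + 1) := by simp
  have hWV1 : qinner W (V 1) = 0 := by rw [← star_qinner, hV.qinner_sub_qproj h1, star_zero]
  have hy0 : ∀ j ∈ Icc 1 (K + 1), y j = 0 := by
    refine eq_zero_of_sum_qsmul_eq (u := fun p ↦ if p = K + 1 then W else V (p + 1)) hy ?_ ?_ ?_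
    · intro p hp
      rw [qinner_qsmul_right]
      split_ifs with hpK
      · rw [hWV1, zero_mul]
      · rw [hV (p + 1) (by simp at hp ⊢; omega) 1 h1, if_neg (by simp at hp; omega), zero_mul]
    · intro p hp j hj hjp
      split_ifs with hpK
      · rw [hA.mul_V (by simp at hp hj ⊢; omega)]
        exact hV.qinner_sub_qproj_sum (Icc_subset_Icc_right (by omega)) _ _
      · exact hA.qinner_V_mul_V_of_lt (by simp at hp; omega) (by simp at hj; omega) (by omega)
    · intro p hp
      split_ifs with hpK
      · rw [hpK, hV.qinner_sub_qproj_self]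
        exact mt qinner_self_eq_zero.1 hW
      · have hpK' : p ∈ Icc 1 K := by simp at hp ⊢; omega
        rw [hA.qinner_V_mul_V (by simp at hp ⊢; omega) hpK', if_pos le_rfl]
        exact hA.hsub_ne p hpK'
  have hVb : qsmul (V 1) b = 0 := by
    rw [← hy]
    exact sum_eq_zero fun j hj ↦ by rw [hy0 j hj, qsmul_zero]
  have hb := qinner_qsmul_right (V 1) (V 1) b
  rwa [hVb, qinner_zero_right, hV 1 h1 1 h1, if_pos rfl, one_mul, eq_comm] at hb

theorem mul_V_eq_qproj (hA : ArnoldiData n m K A V h)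
    (hW : A * V (K + 1) - qproj V (Icc 1 (K + 1)) (A * V (K + 1)) = 0) {j : ℕ}
    (hj : j ∈ Icc 1 (K + 1)) : A * V j = qproj V (Icc 1 (K + 1)) (A * V j) := by
  rcases (mem_Icc.1 hj).2.lt_or_eq with hlt | rfl
  · rw [hA.mul_V (by simp at hj ⊢; omega),
      hA.orthonormal.qproj_sum (Icc_subset_Icc_right (by omega))]
  · exact sub_eq_zero.1 hW

theorem mul_V_succ_eq_sum_fin (hA : ArnoldiData n m K A V h)
    (hW : A * V (K + 1) - qproj V (Icc 1 (K + 1)) (A * V (K + 1)) = 0)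
    {H : Matrix (Fin (K + 1)) (Fin (K + 1)) ℍ[ℝ]}
    (hH : ∀ i j, H i j = qinner (V (i + 1)) (A * V (j + 1))) (j : Fin (K + 1)) :
    A * V (j + 1) = ∑ i : Fin (K + 1), qsmul (V (i + 1)) (H i j) := by
  rw [hA.mul_V_eq_qproj hW (by simp; omega), qproj, sum_Icc_one_eq_sum_fin]
  simp_rw [hH]

end ArnoldiData

theorem glqgmres_breakdown_iff_exact_general (n m k : ℕ) (hk : 1 ≤ k)
    (A : Matrix (Fin n) (Fin n) ℍ[ℝ]) (hAinv : IsUnit A)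
    (B X₀ : Matrix (Fin n) (Fin m) ℍ[ℝ])
    (R₀ : Matrix (Fin n) (Fin m) ℍ[ℝ]) (hR₀ : R₀ = B - A * X₀)
    (β : ℝ) (hβpos : 0 < β)
    (V : ℕ → Matrix (Fin n) (Fin m) ℍ[ℝ]) (hV1 : V 1 = qsmul R₀ ((β : ℍ[ℝ])⁻¹))
    (h : ℕ → ℕ → ℍ[ℝ]) (hA : ArnoldiData n m (k - 1) A V h)
    (W : Matrix (Fin n) (Fin m) ℍ[ℝ])
    (hW : W = A * V k -
        ∑ i ∈ Finset.Icc 1 k, qsmul (V i) (Matrix.trace ((V i)ᴴ * (A * V k))))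
    (Hk : Matrix (Fin k) (Fin k) ℍ[ℝ])
    (hHk : ∀ i j : Fin k, Hk i j =
      if (j : ℕ) + 1 < (i : ℕ) then 0
      else Matrix.trace ((V ((i : ℕ) + 1))ᴴ * (A * V ((j : ℕ) + 1)))) :
    (W = 0 ↔
      ∃ y : ℕ → ℍ[ℝ],
        A * (X₀ + ∑ j ∈ Finset.Icc 1 k, qsmul (V j) (y j)) = B) ∧
    (W = 0 →
      IsUnit Hk ∧
      A * (X₀ + ∑ j : Fin k,
        qsmul (V ((j : ℕ) + 1))
          ((β : ℍ[ℝ]) *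
            (Ring.inverse Hk *ᵥ fun i : Fin k => if i = ⟨0, hk⟩ then 1 else 0) j)) = B) := by
  obtain ⟨K, rfl⟩ : ∃ K, k = K + 1 := ⟨k - 1, by omega⟩
  rw [Nat.add_sub_cancel] at hA
  have hR₀V : R₀ = qsmul (V 1) β := by
    rw [hV1, qsmul_qsmul, inv_mul_cancel₀ (Quaternion.coe_eq_zero.not.2 hβpos.ne'), qsmul_one]
  replace hW : W = A * V (K + 1) - qproj V (Icc 1 (K + 1)) (A * V (K + 1)) := hW
  have hHk' : ∀ i j : Fin (K + 1), Hk i j = qinner (V (i + 1)) (A * V (j + 1)) := fun i j ↦ by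
    rw [hHk]
    split_ifs with hji
    exacts [(hA.qinner_V_mul_V_of_lt (by omega) (by omega) (by omega)).symm, rfl]
  set e : Fin (K + 1) → ℍ[ℝ] := fun i ↦ if i = ⟨0, hk⟩ then 1 else 0
  have exact_of_breakdown : W = 0 → IsUnit Hk ∧ A * (X₀ + ∑ j : Fin (K + 1),
      qsmul (V (j + 1)) ((β : ℍ[ℝ]) * (Ring.inverse Hk *ᵥ e) j)) = B := by
    intro hW0
    have hAv := hA.mul_V_succ_eq_sum_fin (hW ▸ hW0) hHk'
    have hH := isUnit_of_mul_eq_sum_qsmul hAinv hA.orthonormal.fin_succ hAv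
    refine ⟨hH, ?_⟩
    rw [Matrix.mul_add, mul_sum_qsmul_inverse_mulVec hAv hH,
      Fintype.sum_eq_single ⟨0, hk⟩ fun i hi ↦ by simp only [e, if_neg hi, mul_zero, qsmul_zero]]
    simp [e, ← hR₀V, hR₀]
  refine ⟨⟨fun hW0 ↦ ?_, fun ⟨y, hy⟩ ↦ by_contra fun hW0 ↦ ?_⟩, exact_of_breakdown⟩
  · refine ⟨fun j ↦ (β : ℍ[ℝ]) * (Ring.inverse Hk *ᵥ e) (Fin.ofNat (K + 1) (j - 1)), ?_⟩
    rw [sum_Icc_one_eq_sum_fin]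
    simpa using (exact_of_breakdown hW0).2
  · have hAy : ∑ j ∈ Icc 1 (K + 1), qsmul (A * V j) (y j) = qsmul (V 1) β := by
      rw [← hR₀V, hR₀, ← hy, Matrix.mul_add, add_sub_cancel_left, Matrix.mul_sum]
      simp_rw [mul_qsmul]
    exact hβpos.ne' (Quaternion.coe_eq_zero.1 (hA.eq_zero_of_sum_qsmul_mul_V_eq (hW ▸ hW0) hAy))

/-- Breakdown of Gl-QGMRES is equivalent to exactness: with `A`
invertible, `R₀ = B − A X₀`, `β = ‖R₀‖ > 0`, `V₁ = R₀ β⁻¹`, the Arnoldi hypotheses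
through step `k − 1`, `h_{i,k} = tr(V_i^*(A V_k))` and
`W_k = A V_k − Σ_{i=1}^k V_i h_{i,k}`: breakdown `W_k = 0` holds if and only if some
`X₀ + Σ_{j=1}^k V_j y_j` solves `A X = B`; in that case the upper Hessenberg matrix
`H_k` is invertible and `X_k = X₀ + 𝒱_k * (β H_k^{-1} e₁)` is the exact solution. -/
theorem glqgmres_breakdown_iff_exact (n m k : ℕ) (hk : 1 ≤ k)
    (A : Matrix (Fin n) (Fin n) ℍ[ℝ]) (hAinv : IsUnit A)
    (B X₀ : Matrix (Fin n) (Fin m) ℍ[ℝ])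
    (R₀ : Matrix (Fin n) (Fin m) ℍ[ℝ]) (hR₀ : R₀ = B - A * X₀)
    (β : ℝ) (hβ : β = qnorm R₀) (hβpos : 0 < β)
    (V : ℕ → Matrix (Fin n) (Fin m) ℍ[ℝ]) (hV1 : V 1 = qsmul R₀ ((β : ℍ[ℝ])⁻¹))
    (h : ℕ → ℕ → ℍ[ℝ]) (hA : ArnoldiData n m (k - 1) A V h)
    (W : Matrix (Fin n) (Fin m) ℍ[ℝ])
    (hW : W = A * V k -
        ∑ i ∈ Finset.Icc 1 k, qsmul (V i) (Matrix.trace ((V i)ᴴ * (A * V k))))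
    (Hk : Matrix (Fin k) (Fin k) ℍ[ℝ])
    (hHk : ∀ i j : Fin k, Hk i j =
      if (j : ℕ) + 1 < (i : ℕ) then 0
      else Matrix.trace ((V ((i : ℕ) + 1))ᴴ * (A * V ((j : ℕ) + 1)))) :
    (W = 0 ↔
      ∃ y : ℕ → ℍ[ℝ],
        A * (X₀ + ∑ j ∈ Finset.Icc 1 k, qsmul (V j) (y j)) = B) ∧
    (W = 0 →
      IsUnit Hk ∧
      A * (X₀ + ∑ j : Fin k,
        qsmul (V ((j : ℕ) + 1))
          ((β : ℍ[ℝ]) *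
            (Ring.inverse Hk *ᵥ fun i : Fin k => if i = ⟨0, hk⟩ then 1 else 0) j)) = B) :=
  glqgmres_breakdown_iff_exact_general n m k hk A hAinv B X₀ R₀ hR₀ β hβpos V hV1 h hA W hW Hk hHk
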